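/- arXiv:2111.06911 — 4 statements merged into one kernel-verified Lean document; each statement's English description precedes it below -/
import Mathlib

section
/- Representation formula for slice regular power series: if f(q) = ∑ₙ qⁿ aₙ converges on the quaternionic unit ball 𝔹⁴, then for any x, y ∈ ℝ and purely imaginary unit quaternions I, i with x + Iy ∈ 𝔹⁴, one has f(x + I y) = ½[f(x + i y) + f(x − i y)] + ½ I i [f(x − i y) − f(x + i y)]. -/
/-!
A purely imaginary unit quaternion `J` satisfies `J² = -1`, so `Complex.liftAux J` sends
`x + y√-1` to `x + yJ`; it is an isometric `ℝ`-algebra embedding `ℂ → ℍ`. Hence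
`(x + yJ)ⁿ = α + βJ` where `α + β√-1 = (x + y√-1)ⁿ` does not depend on `J`, and the formula
holds term by term (`z = x + y√-1`): the values `α ± βi` at `zⁿ` and `z̄ⁿ` through `i` average
to `α`, and their half-difference `-βi` is turned into `βI` by `I i`. All three series converge
absolutely because `‖x ± yi‖ = ‖x + yI‖`.
-/

open Quaternion ComplexConjugate

theorem summable_pow_mul_of_summable_norm_mul_pow {R : Type*} [NormedRing R] [NormOneClass R]
    [CompleteSpace R] {a : ℕ → R} {q : R} (h : Summable fun n => ‖a n‖ * ‖q‖ ^ n) :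
    Summable fun n => q ^ n * a n :=
  h.of_norm_bounded fun n => (norm_mul_le _ _).trans <| by
    rw [mul_comm]; gcongr; exact norm_pow_le q n

namespace Quaternion

theorem mul_self_eq_neg_one_of_re_eq_zero_of_norm_eq_one {J : ℍ[ℝ]} (hJ0 : J.re = 0)
    (hJ1 : ‖J‖ = 1) : J * J = -1 := by
  rw [← sq, sq_eq_neg_normSq.mpr hJ0, normSq_eq_norm_mul_self, hJ1]; simp

section liftAux

variable {J : ℍ[ℝ]} (hJ : J * J = -1)

theorem liftAux_apply_eq (z : ℂ) :
    Complex.liftAux J hJ z = (z.re : ℍ[ℝ]) + (z.im : ℍ[ℝ]) * J := by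
  rw [Complex.liftAux_apply, algebraMap_def, ← coe_mul_eq_smul]

theorem liftAux_ofReal_add_ofReal_mul_I (x y : ℝ) :
    Complex.liftAux J hJ (x + y * Complex.I) = (x : ℍ[ℝ]) + (y : ℍ[ℝ]) * J := by
  rw [liftAux_apply_eq]; simp

theorem star_liftAux (hJ0 : J.re = 0) (z : ℂ) :
    star (Complex.liftAux J hJ z) = Complex.liftAux J hJ (conj z) := by
  simp [star_eq_neg.mpr hJ0]

theorem normSq_liftAux (hJ0 : J.re = 0) (z : ℂ) :
    normSq (Complex.liftAux J hJ z) = Complex.normSq z := by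
  apply coe_injective
  rw [← Quaternion.self_mul_star, star_liftAux hJ hJ0, ← map_mul, Complex.mul_conj,
    liftAux_apply_eq]
  simp

theorem norm_liftAux (hJ0 : J.re = 0) (z : ℂ) : ‖Complex.liftAux J hJ z‖ = ‖z‖ := by
  rw [← sq_eq_sq₀ (norm_nonneg _) (norm_nonneg _), sq, ← normSq_eq_norm_mul_self,
    normSq_liftAux hJ hJ0, Complex.normSq_eq_norm_sq]

end liftAux

theorem liftAux_mul_representation {I i : ℍ[ℝ]} (hI : I * I = -1) (hi : i * i = -1)
    (z : ℂ) (b : ℍ[ℝ]) :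
    Complex.liftAux I hI z * b =
      (Complex.liftAux i hi z * b + Complex.liftAux i hi (conj z) * b) / 2 +
        I * i * ((Complex.liftAux i hi (conj z) * b - Complex.liftAux i hi z * b) / 2) := by
  simp only [liftAux_apply_eq, Complex.conj_re, Complex.conj_im]
  set α := z.re
  set β := z.im
  have two_ne : (2 : ℍ[ℝ]) ≠ 0 := fun h =>
    two_ne_zero ((QuaternionAlgebra.re_ofNat 2).symm.trans (congrArg QuaternionAlgebra.re h))
  have hsum : ((α : ℍ[ℝ]) + β * i) * b + (α + ((-β : ℝ) : ℍ[ℝ]) * i) * b = α * b * 2 := by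
    push_cast; noncomm_ring
  have hdiff : ((α : ℍ[ℝ]) + ((-β : ℝ) : ℍ[ℝ]) * i) * b - (α + β * i) * b
      = -(β * i * b) * 2 := by
    push_cast; noncomm_ring
  have hIi_mul : I * i * -(β * i * b) = β * I * b := by
    rw [coe_commutes, coe_commutes β I]
    calc I * i * -(i * β * b) = -(I * (i * i) * β * b) := by noncomm_ring
      _ = I * β * b := by rw [hi]; noncomm_ring
  rw [hsum, hdiff, mul_div_cancel_right₀ _ two_ne, mul_div_cancel_right₀ _ two_ne, hIi_mul]
  noncomm_ring

end Quaternion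

theorem stmt_10 (a : ℕ → ℍ[ℝ])
    (hconv : ∀ r : ℝ, 0 ≤ r → r < 1 → Summable fun n : ℕ => ‖a n‖ * r ^ n)
    (x y : ℝ) (I i : ℍ[ℝ])
    (hI : I.re = 0) (hnI : ‖I‖ = 1) (hi : i.re = 0) (hni : ‖i‖ = 1)
    (hq : ‖(x : ℍ[ℝ]) + (y : ℍ[ℝ]) * I‖ < 1) :
    (∑' n : ℕ, ((x : ℍ[ℝ]) + (y : ℍ[ℝ]) * I) ^ n * a n) =
      ((∑' n : ℕ, ((x : ℍ[ℝ]) + (y : ℍ[ℝ]) * i) ^ n * a n) +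
       (∑' n : ℕ, ((x : ℍ[ℝ]) - (y : ℍ[ℝ]) * i) ^ n * a n)) / 2 +
      I * i * (((∑' n : ℕ, ((x : ℍ[ℝ]) - (y : ℍ[ℝ]) * i) ^ n * a n) -
       (∑' n : ℕ, ((x : ℍ[ℝ]) + (y : ℍ[ℝ]) * i) ^ n * a n)) / 2) := by
  have hI2 := mul_self_eq_neg_one_of_re_eq_zero_of_norm_eq_one hI hnI
  have hi2 := mul_self_eq_neg_one_of_re_eq_zero_of_norm_eq_one hi hni
  set φI := Complex.liftAux I hI2
  set φi := Complex.liftAux i hi2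
  set z : ℂ := x + y * Complex.I
  have hzI : (x : ℍ[ℝ]) + y * I = φI z := (liftAux_ofReal_add_ofReal_mul_I ..).symm
  have hzi : (x : ℍ[ℝ]) + y * i = φi z := (liftAux_ofReal_add_ofReal_mul_I ..).symm
  have hzi' : (x : ℍ[ℝ]) - y * i = φi (conj z) := by
    rw [← star_liftAux hi2 hi, ← hzi]; simp [star_eq_neg.mpr hi, sub_eq_add_neg, coe_commutes]
  have hz : ‖z‖ < 1 := by rwa [hzI, norm_liftAux hI2 hI] at hq
  have summable {w : ℂ} (hw : ‖w‖ = ‖z‖) : Summable fun n => φi w ^ n * a n :=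
    summable_pow_mul_of_summable_norm_mul_pow <| by
      rw [norm_liftAux hi2 hi, hw]; exact hconv _ (norm_nonneg z) hz
  have hS := (summable rfl).hasSum
  have hT := (summable (Complex.norm_conj z)).hasSum
  have hterm (n : ℕ) : φI z ^ n * a n = (φi z ^ n * a n + φi (conj z) ^ n * a n) / 2 +
      I * i * ((φi (conj z) ^ n * a n - φi z ^ n * a n) / 2) := by
    simp only [← map_pow]
    exact liftAux_mul_representation hI2 hi2 _ _
  rw [hzI, hzi, hzi', tsum_congr hterm]
  exact ((hS.add hT).div_const 2 |>.add (((hT.sub hS).div_const 2).mul_left (I * i))).tsum_eq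
end

section
/- Identity principle for quaternionic power series via two slices: let f(q) = ∑ₙ qⁿ aₙ and g(q) = ∑ₙ qⁿ bₙ be convergent quaternionic power series on 𝔹⁴. If there exist two distinct purely imaginary unit quaternions i ≠ ±i' such that f = g on 𝔹⁴ ∩ ℂ(i) and f = g on 𝔹⁴ ∩ ℂ(i'), then aₙ = bₙ for all n, i.e., f = g on 𝔹⁴. -/
open Quaternion

private lemma aux_summable (d : ℕ → ℍ[ℝ]) (x : ℝ)
    (h : Summable fun n : ℕ => ‖d n‖ * |x| ^ n) :
    Summable fun n : ℕ => (x : ℍ[ℝ]) ^ n * d n := by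
  refine Summable.of_norm (h.of_nonneg_of_le (fun n => norm_nonneg _) (fun n => le_of_eq ?_))
  rw [norm_mul, norm_pow, Quaternion.norm_coe, Real.norm_eq_abs, mul_comm]

theorem stmt_11 (a b : ℕ → ℍ[ℝ])
    (ha : ∀ r : ℝ, 0 ≤ r → r < 1 → Summable fun n : ℕ => ‖a n‖ * r ^ n)
    (hb : ∀ r : ℝ, 0 ≤ r → r < 1 → Summable fun n : ℕ => ‖b n‖ * r ^ n)
    (i i' : ℍ[ℝ]) (hi : i.re = 0) (hni : ‖i‖ = 1)
    (hi' : i'.re = 0) (hni' : ‖i'‖ = 1) (hne : i ≠ i') (hne' : i ≠ -i')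
    (heq : ∀ x y : ℝ, ‖(x : ℍ[ℝ]) + (y : ℍ[ℝ]) * i‖ < 1 →
      (∑' n : ℕ, ((x : ℍ[ℝ]) + (y : ℍ[ℝ]) * i) ^ n * a n) =
      (∑' n : ℕ, ((x : ℍ[ℝ]) + (y : ℍ[ℝ]) * i) ^ n * b n))
    (heq' : ∀ x y : ℝ, ‖(x : ℍ[ℝ]) + (y : ℍ[ℝ]) * i'‖ < 1 →
      (∑' n : ℕ, ((x : ℍ[ℝ]) + (y : ℍ[ℝ]) * i') ^ n * a n) =
      (∑' n : ℕ, ((x : ℍ[ℝ]) + (y : ℍ[ℝ]) * i') ^ n * b n)) :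
    ∀ n : ℕ, a n = b n := by
  -- Work with the difference of the coefficient sequences.
  set c : ℕ → ℍ[ℝ] := fun n => a n - b n with hc
  have hsub : ∀ x : ℝ, |x| < 1 → Summable (fun n : ℕ => (x : ℍ[ℝ]) ^ n * a n)
      ∧ Summable (fun n : ℕ => (x : ℍ[ℝ]) ^ n * b n) := by
    intro x hx
    exact ⟨aux_summable a x (ha |x| (abs_nonneg x) hx),
      aux_summable b x (hb |x| (abs_nonneg x) hx)⟩
  -- The difference series sums to 0 at real points.
  have hsum : ∀ x : ℝ, |x| < 1 → HasSum (fun n : ℕ => x ^ n • c n) 0 := by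
    intro x hx
    have hx' : ‖(x : ℍ[ℝ]) + ((0 : ℝ) : ℍ[ℝ]) * i‖ < 1 := by
      simpa [Quaternion.norm_coe, Real.norm_eq_abs] using hx
    have h := heq x 0 hx'
    simp only [Quaternion.coe_zero, zero_mul, add_zero] at h
    have h1 := (hsub x hx).1
    have h2 := (hsub x hx).2
    have h3 : HasSum (fun n : ℕ => (x : ℍ[ℝ]) ^ n * a n - (x : ℍ[ℝ]) ^ n * b n)
        ((∑' n : ℕ, (x : ℍ[ℝ]) ^ n * a n) - ∑' n : ℕ, (x : ℍ[ℝ]) ^ n * b n) :=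
      h1.hasSum.sub h2.hasSum
    rw [h, sub_self] at h3
    refine h3.congr_fun fun n => ?_
    show x ^ n • (a n - b n) = _
    rw [smul_sub, ← Quaternion.coe_mul_eq_smul, ← Quaternion.coe_mul_eq_smul]
    push_cast
    ring_nf
  -- Package the coefficients into a formal multilinear series.
  set p : FormalMultilinearSeries ℝ ℝ ℍ[ℝ] :=
    fun n => ContinuousMultilinearMap.mkPiRing ℝ (Fin n) (c n) with hp
  have hpn : ∀ n, ‖p n‖ = ‖c n‖ := fun n => ContinuousMultilinearMap.norm_mkPiRing _
  have hrad : (2⁻¹ : NNReal) ≤ p.radius := by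
    apply FormalMultilinearSeries.le_radius_of_summable
    have hsA := ha 2⁻¹ (by norm_num) (by norm_num)
    have hsB := hb 2⁻¹ (by norm_num) (by norm_num)
    refine (hsA.add hsB).of_nonneg_of_le
      (fun n => mul_nonneg (norm_nonneg _) (by positivity)) (fun n => ?_)
    rw [hpn]
    have : ‖c n‖ ≤ ‖a n‖ + ‖b n‖ := norm_sub_le _ _
    have h2 : ((2⁻¹ : NNReal) : ℝ) ^ n = (2⁻¹ : ℝ) ^ n := by norm_num
    rw [h2, ← add_mul]
    exact mul_le_mul_of_nonneg_right this (by positivity)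
  have hball : HasFPowerSeriesOnBall (0 : ℝ → ℍ[ℝ]) p 0 2⁻¹ := by
    refine ⟨by exact_mod_cast hrad, by norm_num, ?_⟩
    intro y hy
    have hy' : |y| < 1 := by
      have h := EMetric.mem_ball.mp hy
      rw [edist_zero_right] at h
      have h' : (‖y‖₊ : ENNReal) < ((2⁻¹ : NNReal) : ENNReal) := by
        rwa [ENNReal.coe_inv (by norm_num), ENNReal.coe_ofNat]
      have h2 : ‖y‖₊ < (2⁻¹ : NNReal) := ENNReal.coe_lt_coe.mp h'
      have h3 : ‖y‖ < (2⁻¹ : ℝ) := by exact_mod_cast h2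
      rw [← Real.norm_eq_abs]
      linarith
    have hps : ∀ n, ((p n) fun _ : Fin n => y) = y ^ n • c n := fun n => by
      simp [hp, ContinuousMultilinearMap.mkPiRing_apply]
    simpa [hps] using hsum y hy'
  have hzero : p = 0 := hball.hasFPowerSeriesAt.eq_zero
  intro n
  have : p n = 0 := by rw [hzero]; rfl
  have hcn : c n = 0 := by
    have := congrArg (fun (m : ContinuousMultilinearMap ℝ (fun _ : Fin n => ℝ) ℍ[ℝ]) =>
      m (fun _ => 1)) this
    simpa [hp, ContinuousMultilinearMap.mkPiRing_apply] using this
  have := sub_eq_zero.mp hcn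
  exact this
end

section
/- Let b ∈ ℍ be purely imaginary and let i, i' be distinct, non-antipodal purely imaginary unit quaternions. If c ∈ ℂ(i) and c' ∈ ℂ(i') satisfy (1+c)x + i(1−c)x i = (1+c')x + i'(1−c')x i' for all purely imaginary x ∈ ℝ³, then c = c' = 1. -/
/-!
For a unit pure quaternion `i` and pure `x` one has `i x i = x - 2⟪x, i⟫ i`, and `c ∈ ℂ(i)` commutes
with `i`, so the left-hand side equals `2 (x - ⟪x, i⟫ (1 - c) i)`. The hypothesis thus says
`⟪x, i⟫ d = ⟪x, i'⟫ d'` for all pure `x`, with `d = (1 - c) i`, `d' = (1 - c') i'`. Taking `x = i` and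
`x = i'` gives `d = r d'` and `r d = d'` with `r = ⟪i, i'⟫`; since `i ≠ ±i'`, Cauchy–Schwarz gives
`r² ≠ 1`, hence `d = d' = 0`.
-/

open Quaternion

open scoped RealInnerProductSpace

theorem mul_self_real_inner_ne_one {E : Type*} [NormedAddCommGroup E] [InnerProductSpace ℝ E]
    {u v : E} (hu : ‖u‖ = 1) (hv : ‖v‖ = 1) (hne : u ≠ v) (hne' : u ≠ -v) :
    ⟪u, v⟫ * ⟪u, v⟫ ≠ 1 := by
  rw [Ne, mul_self_eq_one_iff, inner_eq_one_iff_of_norm_eq_one hu hv,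
    inner_eq_neg_one_iff_of_norm_eq_one hu hv]
  tauto

theorem eq_zero_of_smul_eq_of_smul_eq {K M : Type*} [Field K] [AddCommGroup M] [Module K M]
    {r : K} {d d' : M} (hr : r * r ≠ 1) (h : d = r • d') (h' : r • d = d') : d = 0 ∧ d' = 0 := by
  have hd : (1 - r * r) • d = 0 := by
    rw [sub_smul, one_smul, mul_smul, h', ← h, sub_self]
  have hd0 : d = 0 := (smul_eq_zero.mp hd).resolve_left (sub_ne_zero.mpr (Ne.symm hr))
  exact ⟨hd0, by rw [← h', hd0, smul_zero]⟩

namespace Quaternion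

theorem mul_mul_eq_smul_sub_smul_of_re_eq_zero {i x : ℍ[ℝ]} (hi : i.re = 0) (hx : x.re = 0) :
    i * x * i = normSq i • x - (2 * ⟪x, i⟫) • i := by
  ext <;> simp [inner_def, normSq_def', hi, hx] <;> ring

theorem commute_of_mem_span_one_self {c i : ℍ[ℝ]} (hc : c ∈ Submodule.span ℝ {1, i}) :
    Commute c i := by
  obtain ⟨a, b, rfl⟩ := Submodule.mem_span_pair.mp hc
  exact ((Commute.one_left i).smul_left a).add_left ((Commute.refl i).smul_left b)

theorem one_add_mul_add_mul_one_sub_mul_mul_eq {i c x : ℍ[ℝ]} (hi : i.re = 0) (hni : ‖i‖ = 1)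
    (hc : Commute c i) (hx : x.re = 0) :
    (1 + c) * x + i * ((1 - c) * x) * i = (2 : ℝ) • (x - ⟪x, i⟫ • ((1 - c) * i)) := by
  have hnormSq : normSq i = 1 := by rw [normSq_eq_norm_mul_self, hni, one_mul]
  have hsandwich := mul_mul_eq_smul_sub_smul_of_re_eq_zero hi hx
  rw [hnormSq, one_smul] at hsandwich
  rw [← mul_assoc, ← ((Commute.one_left i).sub_left hc).eq, mul_assoc, mul_assoc, ← mul_assoc i,
    hsandwich, mul_sub, mul_smul_comm, mul_smul, smul_sub, two_smul, two_smul]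
  noncomm_ring

end Quaternion

theorem stmt_12_general
    (i i' : ℍ[ℝ]) (hi : i.re = 0) (hni : ‖i‖ = 1)
    (hi' : i'.re = 0) (hni' : ‖i'‖ = 1) (hne : i ≠ i') (hne' : i ≠ -i')
    (c c' : ℍ[ℝ]) (hc : c ∈ Submodule.span ℝ ({1, i} : Set ℍ[ℝ]))
    (hc' : c' ∈ Submodule.span ℝ ({1, i'} : Set ℍ[ℝ]))
    (h : ∀ x : ℍ[ℝ], x.re = 0 →
      (1 + c) * x + i * ((1 - c) * x) * i = (1 + c') * x + i' * ((1 - c') * x) * i') :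
    c = 1 ∧ c' = 1 := by
  have key : ∀ x : ℍ[ℝ], x.re = 0 →
      ⟪x, i⟫ • ((1 - c) * i) = ⟪x, i'⟫ • ((1 - c') * i') := by
    intro x hx
    have hx' := h x hx
    rwa [one_add_mul_add_mul_one_sub_mul_mul_eq hi hni (commute_of_mem_span_one_self hc) hx,
      one_add_mul_add_mul_one_sub_mul_mul_eq hi' hni' (commute_of_mem_span_one_self hc') hx,
      (smul_right_injective _ two_ne_zero).eq_iff, sub_right_inj] at hx'
  have hii : ⟪i, i⟫ = 1 := by rw [real_inner_self_eq_norm_sq, hni, one_pow]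
  have hii' : ⟪i', i'⟫ = 1 := by rw [real_inner_self_eq_norm_sq, hni', one_pow]
  obtain ⟨hd, hd'⟩ := eq_zero_of_smul_eq_of_smul_eq (mul_self_real_inner_ne_one hni hni' hne hne')
    (by simpa only [hii, one_smul] using key i hi)
    (by simpa only [real_inner_comm i, hii', one_smul] using key i' hi')
  rw [sub_mul, sub_eq_zero] at hd hd'
  exact ⟨(mul_right_cancel₀ (norm_ne_zero_iff.mp (hni ▸ one_ne_zero)) hd).symm,
    (mul_right_cancel₀ (norm_ne_zero_iff.mp (hni' ▸ one_ne_zero)) hd').symm⟩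

theorem stmt_12 (b : ℍ[ℝ]) (hb : b.re = 0)
    (i i' : ℍ[ℝ]) (hi : i.re = 0) (hni : ‖i‖ = 1)
    (hi' : i'.re = 0) (hni' : ‖i'‖ = 1) (hne : i ≠ i') (hne' : i ≠ -i')
    (c c' : ℍ[ℝ]) (hc : c ∈ Submodule.span ℝ ({1, i} : Set ℍ[ℝ]))
    (hc' : c' ∈ Submodule.span ℝ ({1, i'} : Set ℍ[ℝ]))
    (h : ∀ x : ℍ[ℝ], x.re = 0 →
      (1 + c) * x + i * ((1 - c) * x) * i = (1 + c') * x + i' * ((1 - c') * x) * i') :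
    c = 1 ∧ c' = 1 :=
  stmt_12_general i i' hi hni hi' hni' hne hne' c c' hc hc' h
end

section
/- For a monic complex polynomial f of degree n ≥ 1, the set of roots of f' is contained in the convex hull of the roots of f; consequently, if all roots of f lie in a closed disk D, then all roots of f' lie in D. -/
open Polynomial

theorem Polynomial.mem_convexHull_setOf_isRoot_of_isRoot_derivative {P : ℂ[X]}
    (hP : 0 < P.degree) {z : ℂ} (hz : P.derivative.IsRoot z) :
    z ∈ convexHull ℝ {w : ℂ | P.IsRoot w} := by
  rw [eq_centerMass_of_eval_derivative_eq_zero hP hz]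
  exact Finset.centerMass_mem_convexHull _ (fun w _ ↦ derivRootWeight_nonneg P z w)
    (sum_derivRootWeight_pos hP z) fun w hw ↦ isRoot_of_mem_roots (Multiset.mem_toFinset.mp hw)

theorem stmt_18_general (f : Polynomial ℂ) (hd : 1 ≤ f.natDegree) :
    (∀ z : ℂ, f.derivative.IsRoot z → z ∈ convexHull ℝ {w : ℂ | f.IsRoot w}) ∧
    (∀ (c : ℂ) (ρ : ℝ), (∀ w : ℂ, f.IsRoot w → w ∈ Metric.closedBall c ρ) →
      ∀ z : ℂ, f.derivative.IsRoot z → z ∈ Metric.closedBall c ρ) := by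
  have hdeg : 0 < f.degree := natDegree_pos_iff_degree_pos.mp hd
  have gaussLucas (z : ℂ) (hz : f.derivative.IsRoot z) :
      z ∈ convexHull ℝ {w : ℂ | f.IsRoot w} :=
    mem_convexHull_setOf_isRoot_of_isRoot_derivative hdeg hz
  exact ⟨gaussLucas, fun c ρ hroots z hz ↦
    convexHull_min hroots (convex_closedBall c ρ) (gaussLucas z hz)⟩

theorem stmt_18 (f : Polynomial ℂ) (hm : f.Monic) (hd : 1 ≤ f.natDegree) :
    (∀ z : ℂ, f.derivative.IsRoot z → z ∈ convexHull ℝ {w : ℂ | f.IsRoot w}) ∧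
    (∀ (c : ℂ) (ρ : ℝ), (∀ w : ℂ, f.IsRoot w → w ∈ Metric.closedBall c ρ) →
      ∀ z : ℂ, f.derivative.IsRoot z → z ∈ Metric.closedBall c ρ) :=
  stmt_18_general f hd
end
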